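/- arXiv:1206.1906 — 2 statements merged into one kernel-verified Lean document; each statement's English description precedes it below -/
import Mathlib

section
/- Let H be a vertex-transitive graph. Then l_f(H) = |V(H)| / (2k(H) − max{2λ(H), 2μ(H) − 2}). -/
open Finset

variable {α β V : Type*}

/-- The corona product `G ⊙ H`. -/
def SimpleGraph.corona (G : SimpleGraph α) (H : SimpleGraph β) :
    SimpleGraph (α ⊕ α × β) where
  Adj x y :=
    match x, y with
    | Sum.inl u1, Sum.inl u2 => G.Adj u1 u2
    | Sum.inl u1, Sum.inr p => u1 = p.1
    | Sum.inr p, Sum.inl u2 => p.1 = u2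
    | Sum.inr p, Sum.inr q => p.1 = q.1 ∧ H.Adj p.2 q.2
  symm := ⟨by
    rintro (u1 | p) (u2 | q) h
    · exact h.symm
    · exact h.symm
    · exact h.symm
    · exact ⟨h.1.symm, h.2.symm⟩⟩
  loopless := ⟨by
    rintro (u | p) h
    · exact G.irrefl h
    · exact H.irrefl h.2⟩

/-- The lexicographic product `G[H]`. -/
def SimpleGraph.lexProd (G : SimpleGraph α) (H : SimpleGraph β) :
    SimpleGraph (α × β) where
  Adj x y := G.Adj x.1 y.1 ∨ (x.1 = y.1 ∧ H.Adj x.2 y.2)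
  symm := ⟨by
    rintro x y (h | ⟨h1, h2⟩)
    · exact Or.inl h.symm
    · exact Or.inr ⟨h1.symm, h2.symm⟩⟩
  loopless := ⟨by
    rintro x (h | ⟨h1, h2⟩)
    · exact G.irrefl h
    · exact H.irrefl h2⟩

open scoped Classical in
/-- `R_F{x,y}`: the set of vertices resolving `x` and `y` (distance measured by `edist`,
which is `∞` between vertices in different components). -/
noncomputable def resolvingFinset (F : SimpleGraph V) [Fintype V] (x y : V) : Finset V :=
  univ.filter fun z => F.edist x z ≠ F.edist y z

/-- `S_H{v₁,v₂} = {v₁,v₂} ∪ (N_H(v₁) Δ N_H(v₂))`. -/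
def locatingFinset (H : SimpleGraph V) [Fintype V] [DecidableEq V]
    [DecidableRel H.Adj] (v1 v2 : V) : Finset V :=
  {v1, v2} ∪ symmDiff (H.neighborFinset v1) (H.neighborFinset v2)

/-- A resolving function of `F`. -/
def IsResolvingFn (F : SimpleGraph V) [Fintype V] (g : V → ℝ) : Prop :=
  (∀ v, g v ∈ Set.Icc (0 : ℝ) 1) ∧
    ∀ x y : V, x ≠ y → 1 ≤ ∑ z ∈ resolvingFinset F x y, g z

/-- The fractional metric dimension `dim_f(F)`. -/
noncomputable def fracMetricDim (F : SimpleGraph V) [Fintype V] : ℝ :=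
  sInf {w | ∃ g, IsResolvingFn F g ∧ w = ∑ v, g v}

/-- A locating function of `H`. -/
def IsLocatingFn (H : SimpleGraph V) [Fintype V] [DecidableEq V]
    [DecidableRel H.Adj] (g : V → ℝ) : Prop :=
  (∀ v, g v ∈ Set.Icc (0 : ℝ) 1) ∧
    ∀ v1 v2 : V, v1 ≠ v2 → 1 ≤ ∑ v ∈ locatingFinset H v1 v2, g v

/-- `l_f(H)`: the minimum weight of a locating function. -/
noncomputable def fracLoc (H : SimpleGraph V) [Fintype V] [DecidableEq V]
    [DecidableRel H.Adj] : ℝ :=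
  sInf {w | ∃ g, IsLocatingFn H g ∧ w = ∑ v, g v}

open scoped Classical in
/-- `λ(H)`: maximum number of common neighbours of two adjacent vertices, `-1` if no edges. -/
noncomputable def lambdaMax (H : SimpleGraph V) [Fintype V] : ℤ :=
  if hne : (univ.filter fun p : V × V => H.Adj p.1 p.2).Nonempty then
    (univ.filter fun p : V × V => H.Adj p.1 p.2).sup' hne fun p =>
      ((univ.filter fun w => H.Adj p.1 w ∧ H.Adj p.2 w).card : ℤ)
  else -1

open scoped Classical in
/-- `μ(H)`: maximum number of common neighbours of two distinct nonadjacent vertices,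
`0` for complete graphs. -/
noncomputable def muMax (H : SimpleGraph V) [Fintype V] : ℤ :=
  if hne : (univ.filter fun p : V × V => p.1 ≠ p.2 ∧ ¬H.Adj p.1 p.2).Nonempty then
    (univ.filter fun p : V × V => p.1 ≠ p.2 ∧ ¬H.Adj p.1 p.2).sup' hne fun p =>
      ((univ.filter fun w => H.Adj p.1 w ∧ H.Adj p.2 w).card : ℤ)
  else 0

/-- A graph is vertex-transitive if its automorphism group is transitive on vertices. -/
def IsVertexTransitive (H : SimpleGraph V) : Prop :=
  ∀ u v : V, ∃ φ : H ≃g H, φ u = v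

/-- Two distinct vertices are twins if they have the same closed or the same open
neighbourhood. -/
def SimpleGraph.Twins (G : SimpleGraph V) (u1 u2 : V) : Prop :=
  u1 ≠ u2 ∧ (insert u1 (G.neighborSet u1) = insert u2 (G.neighborSet u2) ∨
    G.neighborSet u1 = G.neighborSet u2)

open scoped Classical in
/-- `m₁(G)`: number of vertices in twin-equivalence classes of type 1 (singletons). -/
noncomputable def m1 (G : SimpleGraph V) [Fintype V] : ℕ :=
  (univ.filter fun u => ∀ w, ¬G.Twins u w).card

open scoped Classical in
/-- `m₂(G)`: number of vertices in twin-equivalence classes of type 2 (cliques). -/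
noncomputable def m2 (G : SimpleGraph V) [Fintype V] : ℕ :=
  (univ.filter fun u => ∃ w, G.Twins u w ∧ G.Adj u w).card

open scoped Classical in
/-- `m₃(G)`: number of vertices in twin-equivalence classes of type 3 (independent sets). -/
noncomputable def m3 (G : SimpleGraph V) [Fintype V] : ℕ :=
  (univ.filter fun u => ∃ w, G.Twins u w ∧ ¬G.Adj u w).card

/-!
In a `k`-regular graph, `|S{u,v}| = 2k - 2|N(u) ∩ N(v)|` if `u ~ v` and `2k + 2 - 2|N(u) ∩ N(v)|`
otherwise, so the smallest of the sets `S{u,v}` has `s = 2k - max{2λ, 2μ - 2}` elements, and the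
constant function `1/s` is a locating function of weight `|V|/s`. Conversely, summing the
condition `g(S{φu, φv}) ≥ 1` over all automorphisms `φ`, for a smallest `S{u,v}`, gives
`|Aut| ≤ s · Σ_φ g(φ u)`; by vertex-transitivity `Σ_φ g(φ u)` does not depend on `u`, so it equals
`|Aut| · (Σ_v g v) / |V|`, and the weight of `g` is at least `|V|/s`.
-/

namespace Finset

theorem card_symmDiff_add_two_mul_card_inter {α : Type*} [DecidableEq α] (s t : Finset α) :
    #(symmDiff s t) + 2 * #(s ∩ t) = #s + #t := by
  rw [symmDiff_eq_sup_sdiff_inf, sup_eq_union, inf_eq_inter,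
    card_sdiff_of_subset inter_subset_union, ← card_union_add_card_inter]
  have := card_le_card (inter_subset_union (s := s) (t := t))
  omega

variable {ι α : Type*} [LinearOrder α] {s : Finset ι} (f : ι → α) (d : α)

theorem le_dite_sup' {i : ι} (hi : i ∈ s) :
    f i ≤ if h : s.Nonempty then s.sup' h f else d := by
  rw [dif_pos ⟨i, hi⟩]
  exact le_sup' f hi

theorem exists_dite_sup'_eq (hs : s.Nonempty) :
    ∃ i ∈ s, (if h : s.Nonempty then s.sup' h f else d) = f i := by
  rw [dif_pos hs]
  exact exists_mem_eq_sup' hs f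

end Finset

namespace SimpleGraph

variable {V : Type*} [Fintype V] [DecidableEq V] {H : SimpleGraph V} [DecidableRel H.Adj]

theorem card_filter_adj_and_adj (u v : V) [DecidablePred fun w => H.Adj u w ∧ H.Adj v w] :
    #{w | H.Adj u w ∧ H.Adj v w} = #(H.neighborFinset u ∩ H.neighborFinset v) := by
  congr 1
  ext w
  simp

theorem locatingFinset_of_adj {u v : V} (huv : H.Adj u v) :
    locatingFinset H u v = symmDiff (H.neighborFinset u) (H.neighborFinset v) := by
  refine union_eq_right.2 fun x hx => ?_
  rcases mem_insert.1 hx with rfl | hx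
  · simpa [mem_symmDiff] using huv.symm
  · simpa [mem_symmDiff, mem_singleton.1 hx] using huv

theorem disjoint_pair_symmDiff_neighborFinset {u v : V} (huv : ¬H.Adj u v) :
    Disjoint {u, v} (symmDiff (H.neighborFinset u) (H.neighborFinset v)) := by
  have hvu : ¬H.Adj v u := fun h => huv h.symm
  simp [mem_symmDiff, huv, hvu]

variable {k : ℕ}

theorem IsRegularOfDegree.card_locatingFinset_of_adj (hreg : H.IsRegularOfDegree k) {u v : V}
    (huv : H.Adj u v) :
    #(locatingFinset H u v) + 2 * #(H.neighborFinset u ∩ H.neighborFinset v) = 2 * k := by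
  rw [locatingFinset_of_adj huv, card_symmDiff_add_two_mul_card_inter,
    card_neighborFinset_eq_degree, card_neighborFinset_eq_degree, hreg u, hreg v, two_mul]

theorem IsRegularOfDegree.card_locatingFinset_of_not_adj (hreg : H.IsRegularOfDegree k) {u v : V}
    (hne : u ≠ v) (huv : ¬H.Adj u v) :
    #(locatingFinset H u v) + 2 * #(H.neighborFinset u ∩ H.neighborFinset v) = 2 * k + 2 := by
  have := card_symmDiff_add_two_mul_card_inter (H.neighborFinset u) (H.neighborFinset v)
  rw [card_neighborFinset_eq_degree, card_neighborFinset_eq_degree, hreg u, hreg v] at this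
  rw [locatingFinset, card_union_of_disjoint (disjoint_pair_symmDiff_neighborFinset huv),
    card_pair hne]
  omega

-- `lambdaMax` and `muMax` are defined with classical decidability instances; these restatements
-- use the ambient ones.
theorem lambdaMax_eq : lambdaMax H =
    if h : ({p | H.Adj p.1 p.2} : Finset (V × V)).Nonempty then
      ({p | H.Adj p.1 p.2} : Finset (V × V)).sup' h
        fun p => (#(H.neighborFinset p.1 ∩ H.neighborFinset p.2) : ℤ)
    else -1 := by
  simp only [lambdaMax, card_filter_adj_and_adj]
  congr!

theorem muMax_eq : muMax H =
    if h : ({p | p.1 ≠ p.2 ∧ ¬H.Adj p.1 p.2} : Finset (V × V)).Nonempty then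
      ({p | p.1 ≠ p.2 ∧ ¬H.Adj p.1 p.2} : Finset (V × V)).sup' h
        fun p => (#(H.neighborFinset p.1 ∩ H.neighborFinset p.2) : ℤ)
    else 0 := by
  simp only [muMax, card_filter_adj_and_adj]
  congr!

theorem card_inter_neighborFinset_le_lambdaMax {u v : V} (huv : H.Adj u v) :
    (#(H.neighborFinset u ∩ H.neighborFinset v) : ℤ) ≤ lambdaMax H := by
  rw [lambdaMax_eq]
  refine le_dite_sup' _ (_ : ℤ) (i := (u, v)) ?_
  simpa using huv

theorem exists_adj_lambdaMax_eq {u v : V} (huv : H.Adj u v) :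
    ∃ a b, H.Adj a b ∧ lambdaMax H = #(H.neighborFinset a ∩ H.neighborFinset b) := by
  have hne : ({p | H.Adj p.1 p.2} : Finset (V × V)).Nonempty := ⟨(u, v), by simpa using huv⟩
  rw [lambdaMax_eq]
  obtain ⟨⟨a, b⟩, hab, h⟩ := exists_dite_sup'_eq _ (-1 : ℤ) hne
  exact ⟨a, b, by simpa using hab, h⟩

omit [DecidableEq V] [DecidableRel H.Adj] in
theorem lambdaMax_eq_neg_one (h : ∀ u v, ¬H.Adj u v) : lambdaMax H = -1 := by
  simp [lambdaMax, h]

theorem card_inter_neighborFinset_le_muMax {u v : V} (hne : u ≠ v) (huv : ¬H.Adj u v) :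
    (#(H.neighborFinset u ∩ H.neighborFinset v) : ℤ) ≤ muMax H := by
  rw [muMax_eq]
  refine le_dite_sup' _ (_ : ℤ) (i := (u, v)) ?_
  simpa using ⟨hne, huv⟩

theorem exists_ne_not_adj_muMax_eq {u v : V} (hne : u ≠ v) (huv : ¬H.Adj u v) :
    ∃ a b, a ≠ b ∧ ¬H.Adj a b ∧ muMax H = #(H.neighborFinset a ∩ H.neighborFinset b) := by
  have hpair : ({p | p.1 ≠ p.2 ∧ ¬H.Adj p.1 p.2} : Finset (V × V)).Nonempty :=
    ⟨(u, v), by simpa using ⟨hne, huv⟩⟩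
  rw [muMax_eq]
  obtain ⟨⟨a, b⟩, hab, h⟩ := exists_dite_sup'_eq _ (0 : ℤ) hpair
  simp only [mem_filter, mem_univ, true_and] at hab
  exact ⟨a, b, hab.1, hab.2, h⟩

omit [DecidableEq V] [DecidableRel H.Adj] in
theorem muMax_eq_zero (h : ∀ u v, u ≠ v → H.Adj u v) : muMax H = 0 := by
  simp only [muMax, dite_eq_right_iff]
  rintro ⟨⟨u, v⟩, huv⟩
  simp only [mem_filter, mem_univ, true_and] at huv
  exact absurd (h u v huv.1) huv.2

theorem IsRegularOfDegree.le_card_locatingFinset (hreg : H.IsRegularOfDegree k) {u v : V}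
    (huv : u ≠ v) :
    2 * (k : ℤ) - max (2 * lambdaMax H) (2 * muMax H - 2) ≤ #(locatingFinset H u v) := by
  by_cases hadj : H.Adj u v
  · have := hreg.card_locatingFinset_of_adj hadj
    have := card_inter_neighborFinset_le_lambdaMax hadj
    omega
  · have := hreg.card_locatingFinset_of_not_adj huv hadj
    have := card_inter_neighborFinset_le_muMax huv hadj
    omega

theorem IsRegularOfDegree.exists_card_locatingFinset_eq (hreg : H.IsRegularOfDegree k)
    (hcard : 1 < Fintype.card V) : ∃ u v, u ≠ v ∧
      (#(locatingFinset H u v) : ℤ) = 2 * k - max (2 * lambdaMax H) (2 * muMax H - 2) := by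
  by_cases hlambda : (∃ a b, H.Adj a b) ∧ 2 * muMax H - 2 ≤ 2 * lambdaMax H
  · obtain ⟨⟨a, b, hab⟩, hle⟩ := hlambda
    obtain ⟨u, v, huv, hlambda_eq⟩ := exists_adj_lambdaMax_eq hab
    have := hreg.card_locatingFinset_of_adj huv
    exact ⟨u, v, huv.ne, by omega⟩
  have hnonadj : ∃ a b, a ≠ b ∧ ¬H.Adj a b := by
    by_contra! hcomplete
    obtain ⟨a, b, hab⟩ := Fintype.exists_pair_of_one_lt_card hcard
    have := card_inter_neighborFinset_le_lambdaMax (hcomplete a b hab)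
    exact hlambda ⟨⟨a, b, hcomplete a b hab⟩, by rw [muMax_eq_zero hcomplete]; omega⟩
  obtain ⟨a, b, hab, hnab⟩ := hnonadj
  obtain ⟨u, v, huv, hnuv, hmu_eq⟩ := exists_ne_not_adj_muMax_eq hab hnab
  have hle : 2 * lambdaMax H ≤ 2 * muMax H - 2 := by
    by_cases hedge : ∃ a b, H.Adj a b
    · exact (not_le.1 fun h => hlambda ⟨hedge, h⟩).le
    · simp only [not_exists] at hedge
      rw [lambdaMax_eq_neg_one hedge]
      omega
  have := hreg.card_locatingFinset_of_not_adj huv hnuv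
  exact ⟨u, v, huv, by omega⟩

end SimpleGraph

namespace SimpleGraph.Iso

variable {V W : Type*} [Fintype V] [Fintype W] [DecidableEq W]
  {G : SimpleGraph V} [DecidableRel G.Adj] {G' : SimpleGraph W} [DecidableRel G'.Adj]

theorem image_neighborFinset (f : G ≃g G') (v : V) :
    (G.neighborFinset v).image f = G'.neighborFinset (f v) := by
  ext w
  obtain ⟨x, rfl⟩ := f.surjective w
  simp [f.injective.eq_iff, f.map_adj_iff]

theorem image_locatingFinset [DecidableEq V] (f : G ≃g G') (u v : V) :
    (locatingFinset G u v).image f = locatingFinset G' (f u) (f v) := by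
  rw [locatingFinset, locatingFinset, image_union, image_symmDiff _ _ f.injective,
    image_insert, image_singleton, f.image_neighborFinset, f.image_neighborFinset]

end SimpleGraph.Iso

section VertexTransitive

variable {V : Type*} {H : SimpleGraph V}

theorem IsVertexTransitive.sum_apply_eq [Fintype (H ≃g H)] (hvt : IsVertexTransitive H)
    (f : V → ℝ) (u v : V) :
    ∑ φ : H ≃g H, f (φ u) = ∑ φ : H ≃g H, f (φ v) := by
  obtain ⟨ψ, rfl⟩ := hvt v u
  exact Equiv.sum_comp (Equiv.mulRight ψ) fun φ : H ≃g H => f (φ v)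

theorem IsVertexTransitive.card_mul_sum_apply [Fintype V] [Fintype (H ≃g H)]
    (hvt : IsVertexTransitive H) (f : V → ℝ) (u : V) :
    Fintype.card V * ∑ φ : H ≃g H, f (φ u) = Fintype.card (H ≃g H) * ∑ v, f v := by
  calc Fintype.card V * ∑ φ : H ≃g H, f (φ u)
      = ∑ v, ∑ φ : H ≃g H, f (φ v) := by
        rw [sum_congr rfl fun v _ => hvt.sum_apply_eq f v u, sum_const, card_univ, nsmul_eq_mul]
    _ = ∑ φ : H ≃g H, ∑ v, f (φ v) := sum_comm
    _ = Fintype.card (H ≃g H) * ∑ v, f v := by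
        rw [sum_congr rfl fun φ _ => φ.toEquiv.sum_comp f, sum_const, card_univ, nsmul_eq_mul]

theorem IsVertexTransitive.card_le_card_locatingFinset_mul_sum [Fintype V] [DecidableEq V]
    [DecidableRel H.Adj] (hvt : IsVertexTransitive H) {g : V → ℝ} (hg : IsLocatingFn H g)
    {u v : V} (huv : u ≠ v) :
    (Fintype.card V : ℝ) ≤ #(locatingFinset H u v) * ∑ x, g x := by
  have : Finite (H ≃g H) := Finite.of_injective _ RelIso.toEquiv_injective
  have := Fintype.ofFinite (H ≃g H)
  set c := ∑ φ : H ≃g H, g (φ u)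
  have hcover : (Fintype.card (H ≃g H) : ℝ) ≤ #(locatingFinset H u v) * c :=
    calc (Fintype.card (H ≃g H) : ℝ) = ∑ _φ : H ≃g H, 1 := by simp
      _ ≤ ∑ φ : H ≃g H, ∑ x ∈ locatingFinset H u v, g (φ x) := by
        refine sum_le_sum fun φ _ => ?_
        have := hg.2 (φ u) (φ v) (φ.injective.ne huv)
        rwa [← φ.image_locatingFinset, sum_image fun x _ y _ h => φ.injective h] at this
      _ = #(locatingFinset H u v) * c := by
        rw [sum_comm, sum_congr rfl fun x _ => hvt.sum_apply_eq g x u, sum_const, nsmul_eq_mul]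
  have hcard : (0 : ℝ) < Fintype.card (H ≃g H) := by exact_mod_cast Fintype.card_pos
  refine le_of_mul_le_mul_right ?_ hcard
  calc (Fintype.card V : ℝ) * Fintype.card (H ≃g H)
      ≤ Fintype.card V * (#(locatingFinset H u v) * c) := by gcongr
    _ = #(locatingFinset H u v) * (Fintype.card V * c) := by ring
    _ = #(locatingFinset H u v) * (∑ x, g x) * Fintype.card (H ≃g H) := by
        rw [hvt.card_mul_sum_apply]
        ring

end VertexTransitive

section FracLoc

variable {V : Type*} [Fintype V] [DecidableEq V] {H : SimpleGraph V} [DecidableRel H.Adj]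

theorem isLocatingFn_const_inv {s : ℝ} (hs : 1 ≤ s)
    (h : ∀ u v, u ≠ v → s ≤ #(locatingFinset H u v)) : IsLocatingFn H fun _ => s⁻¹ := by
  refine ⟨fun _ => ⟨by positivity, inv_le_one_of_one_le₀ hs⟩, fun u v huv => ?_⟩
  rw [sum_const, nsmul_eq_mul, ← div_eq_mul_inv, one_le_div₀ (by positivity)]
  exact h u v huv

theorem two_le_card_locatingFinset {u v : V} (huv : u ≠ v) : 2 ≤ #(locatingFinset H u v) :=
  card_pair huv ▸ card_le_card subset_union_left

theorem IsVertexTransitive.fracLoc_eq (hvt : IsVertexTransitive H) {u v : V} (huv : u ≠ v)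
    (hmin : ∀ x y, x ≠ y → #(locatingFinset H u v) ≤ #(locatingFinset H x y)) :
    fracLoc H = Fintype.card V / #(locatingFinset H u v) := by
  have hs : (1 : ℝ) ≤ #(locatingFinset H u v) := by
    exact_mod_cast (two_le_card_locatingFinset huv).trans' one_le_two
  have hmem : Fintype.card V / (#(locatingFinset H u v) : ℝ) ∈
      {w | ∃ g, IsLocatingFn H g ∧ w = ∑ v, g v} :=
    ⟨_, isLocatingFn_const_inv hs fun x y hxy => by exact_mod_cast hmin x y hxy, by
      simp [div_eq_mul_inv]⟩
  have hlower : Fintype.card V / (#(locatingFinset H u v) : ℝ) ∈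
      lowerBounds {w | ∃ g, IsLocatingFn H g ∧ w = ∑ v, g v} := by
    rintro _ ⟨g, hg, rfl⟩
    rw [div_le_iff₀' (by positivity)]
    exact hvt.card_le_card_locatingFinset_mul_sum hg huv
  exact le_antisymm (csInf_le ⟨_, hlower⟩ hmem) (le_csInf ⟨_, hmem⟩ hlower)

end FracLoc

/-- For a vertex-transitive graph `H` (of degree `k`),
`l_f(H) = |V(H)| / (2k(H) - max{2λ(H), 2μ(H) - 2})`. -/
theorem stmt_1 {V : Type*} [Fintype V] [DecidableEq V] (H : SimpleGraph V)
    [DecidableRel H.Adj] (hcard : 2 ≤ Fintype.card V)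
    (hvt : IsVertexTransitive H) (k : ℕ) (hreg : H.IsRegularOfDegree k) :
    fracLoc H =
      (Fintype.card V : ℝ) /
        ((2 * (k : ℤ) - max (2 * lambdaMax H) (2 * muMax H - 2) : ℤ) : ℝ) := by
  obtain ⟨u, v, huv, hmin⟩ := hreg.exists_card_locatingFinset_eq hcard
  rw [← hmin, hvt.fracLoc_eq huv fun x y hxy => ?_, Int.cast_natCast]
  exact_mod_cast hmin ▸ hreg.le_card_locatingFinset hxy
end

section
/- Let G be a connected graph and H a graph. If x and y are two distinct vertices of the corona product G⊙H such that {x,y} is not contained in ^uH for any vertex u of G, then there exists a vertex u0 of G such that ^{u0}H ⊆ R_{G⊙H}{x,y}. -/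
open Finset

variable {α β V : Type*}

/-
A vertex of `^{u}H` is at distance 1 from `u`, at distance 2 from the other
vertices of `^{u}H` and from the neighbours of `u` in `G`, and at distance greater than 2 from
the vertices of every other copy of `H`. If `x = u ∈ V(G)`, the copy `^{u}H` resolves `x` and
`y` unless `y` lies in it; in that case the copy over a neighbour of `u` (which exists as `G`
is connected and nontrivial) does. If `x` and `y` lie in different copies, the copy of `x`
resolves them.
-/

namespace SimpleGraph

variable {G : SimpleGraph α} {H : SimpleGraph β}

lemma edist_le_two_of_adj_of_adj {F : SimpleGraph V} {u m v : V} (h₁ : F.Adj u m)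
    (h₂ : F.Adj m v) : F.edist u v ≤ 2 := by
  simpa using (Walk.cons h₁ h₂.toWalk).edist_le

lemma corona_edist_inl_inr_self (p : α × β) :
    (G.corona H).edist (Sum.inl p.1) (Sum.inr p) ≤ 1 :=
  (edist_eq_one_iff_adj.mpr rfl).le

lemma corona_edist_inl_inr_le_two {u : α} {p : α × β} (h : G.Adj u p.1) :
    (G.corona H).edist (Sum.inl u) (Sum.inr p) ≤ 2 :=
  edist_le_two_of_adj_of_adj (m := Sum.inl p.1) h rfl

lemma corona_edist_inr_inr_le_two (u : α) (w v : β) :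
    (G.corona H).edist (Sum.inr (u, w)) (Sum.inr (u, v)) ≤ 2 :=
  edist_le_two_of_adj_of_adj (m := Sum.inl u) rfl rfl

lemma corona_one_lt_edist_inl_inr {u : α} {p : α × β} (h : u ≠ p.1) :
    1 < (G.corona H).edist (Sum.inl u) (Sum.inr p) := by
  rw [← not_le, edist_le_one_iff_adj_or_eq]
  rintro (hadj | heq)
  exacts [h hadj, Sum.inl_ne_inr heq]

lemma corona_two_lt_edist_inr_inr {p q : α × β} (h : p.1 ≠ q.1) :
    2 < (G.corona H).edist (Sum.inr p) (Sum.inr q) := by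
  refine two_lt_edist_iff.mpr ⟨fun heq => h (by cases heq; rfl), fun hadj => h hadj.1, ?_⟩
  refine Set.eq_empty_of_forall_notMem fun m hm => ?_
  obtain ⟨hpm, hqm⟩ := (mem_commonNeighbors _).mp hm
  rcases m with c | r
  exacts [h (hpm.trans hqm.symm), h (hpm.1.trans hqm.1.symm)]

end SimpleGraph

open SimpleGraph

lemma resolvingFinset_comm (F : SimpleGraph V) [Fintype V] (x y : V) :
    resolvingFinset F x y = resolvingFinset F y x := by
  ext z
  simp only [resolvingFinset, mem_filter, ne_comm]

lemma mem_resolvingFinset_of_edist_le_of_lt {F : SimpleGraph V} [Fintype V] {x y z : V}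
    {k : ℕ∞} (hx : F.edist x z ≤ k) (hy : k < F.edist y z) : z ∈ resolvingFinset F x y := by
  simp only [resolvingFinset, mem_filter, mem_univ, true_and]
  exact fun heq => (hx.trans_lt hy).ne heq

section CoronaResolving

variable [Fintype α] [Fintype β] {G : SimpleGraph α} {H : SimpleGraph β}

lemma exists_copy_subset_resolvingFinset_inl [Nontrivial α] (hG : G.Preconnected) (u : α)
    {y : α ⊕ α × β} (hy : y ≠ Sum.inl u) :
    ∃ u0 : α, ∀ v : β, Sum.inr (u0, v) ∈ resolvingFinset (G.corona H) (Sum.inl u) y := by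
  rcases y with u' | ⟨u', w⟩
  · refine ⟨u, fun v => mem_resolvingFinset_of_edist_le_of_lt
      (corona_edist_inl_inr_self (u, v)) (corona_one_lt_edist_inl_inr ?_)⟩
    exact fun hu => hy (congrArg Sum.inl hu)
  by_cases hu : u' = u
  · subst hu
    obtain ⟨u0, hadj⟩ := hG.exists_adj_of_nontrivial u'
    exact ⟨u0, fun v => mem_resolvingFinset_of_edist_le_of_lt
      (corona_edist_inl_inr_le_two hadj) (corona_two_lt_edist_inr_inr hadj.ne)⟩
  · exact ⟨u, fun v => mem_resolvingFinset_of_edist_le_of_lt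
      (corona_edist_inl_inr_self (u, v))
      ((corona_two_lt_edist_inr_inr hu).trans' (by norm_num))⟩

lemma exists_copy_subset_resolvingFinset_inr_inr {u₁ u₂ : α} (w₁ w₂ : β) (hu : u₁ ≠ u₂) :
    ∃ u0 : α, ∀ v : β,
      Sum.inr (u0, v) ∈ resolvingFinset (G.corona H) (Sum.inr (u₁, w₁)) (Sum.inr (u₂, w₂)) :=
  ⟨u₁, fun v => mem_resolvingFinset_of_edist_le_of_lt (corona_edist_inr_inr_le_two u₁ w₁ v)
    (corona_two_lt_edist_inr_inr hu.symm)⟩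

end CoronaResolving

theorem stmt_5_general {α β : Type*} [Fintype α] [Fintype β]
    (G : SimpleGraph α) (H : SimpleGraph β)
    (hG : G.Connected) (hca : 2 ≤ Fintype.card α)
    (x y : α ⊕ α × β) (hxy : x ≠ y)
    (h : ∀ u : α, ¬∃ w1 w2 : β, x = Sum.inr (u, w1) ∧ y = Sum.inr (u, w2)) :
    ∃ u0 : α, ∀ v : β, Sum.inr (u0, v) ∈ resolvingFinset (G.corona H) x y := by
  have : Nontrivial α := Fintype.one_lt_card_iff_nontrivial.mp hca
  rcases x with u | ⟨u₁, w₁⟩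
  · exact exists_copy_subset_resolvingFinset_inl hG.preconnected u hxy.symm
  rcases y with u | ⟨u₂, w₂⟩
  · rw [resolvingFinset_comm]
    exact exists_copy_subset_resolvingFinset_inl hG.preconnected u hxy
  · exact exists_copy_subset_resolvingFinset_inr_inr w₁ w₂
      fun hu => h u₁ ⟨w₁, w₂, rfl, hu ▸ rfl⟩

/-- If `x ≠ y` are vertices of `G ⊙ H` not both lying in the same
copy `ᵘH` of `H`, then some copy `ᵘ⁰H` is entirely contained in `R_{G⊙H}{x, y}`. -/
theorem stmt_5 {α β : Type*} [Fintype α] [Fintype β]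
    (G : SimpleGraph α) (H : SimpleGraph β)
    (hG : G.Connected) (hca : 2 ≤ Fintype.card α) (hcb : 2 ≤ Fintype.card β)
    (x y : α ⊕ α × β) (hxy : x ≠ y)
    (h : ∀ u : α, ¬∃ w1 w2 : β, x = Sum.inr (u, w1) ∧ y = Sum.inr (u, w2)) :
    ∃ u0 : α, ∀ v : β, Sum.inr (u0, v) ∈ resolvingFinset (G.corona H) x y :=
  stmt_5_general G H hG hca x y hxy h
end
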